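/- Let U be a finite set of unit vectors in ℝ² with pos(U) = ℝ², and let u ∈ U be such that no two vectors v, w ∈ U satisfy pos{u, v, w} = ℝ². Then for every subset {x, y, z} ⊆ U \ {u} with pos{u, x, y, z} = ℝ², one has −u ∈ {x, y, z}. -/

import Mathlib

open RealInnerProductSpace

noncomputable section

abbrev V2 : Type := EuclideanSpace ℝ (Fin 2)

/-- The positive hull: all nonnegative linear combinations of elements of `M`. -/
def pos {E : Type*} [AddCommMonoid E] [Module ℝ E] (M : Set E) : Set E :=
  {x | ∃ (s : Finset E) (c : E → ℝ),
    (↑s : Set E) ⊆ M ∧ (∀ v, 0 ≤ c v) ∧ x = ∑ v ∈ s, c v • v}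

/-! Write `wedge a b = a₀ b₁ - a₁ b₀`. If `-u ∉ {x, y, z}`, no element of `{x, y, z}` is parallel
to the unit vector `u`. Among those strictly to the left of `u`, let `m` be the one making the largest
angle with `u`. For `w` strictly to the right of `u`, `wedge m w > 0` would make `{u, m, w}`
positively spanning, so `wedge m w ≤ 0`; hence `{u, x, y, z}` lies in the closed half-plane
`wedge m · ≤ 0` and cannot positively span the plane. If nothing lies to the left of `u`, the
half-plane `wedge u · ≤ 0` does the same job. -/

section PositiveHull

variable {E : Type*} [AddCommMonoid E] [Module ℝ E] {M : Set E}

lemma nonpos_of_mem_pos (f : E →ₗ[ℝ] ℝ) (hM : ∀ g ∈ M, f g ≤ 0) {t : E} (ht : t ∈ pos M) :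
    f t ≤ 0 := by
  obtain ⟨s, c, hs, hc, rfl⟩ := ht
  rw [map_sum]
  refine Finset.sum_nonpos fun v hv => ?_
  rw [map_smul, smul_eq_mul]
  exact mul_nonpos_of_nonneg_of_nonpos (hc v) (hM v (hs hv))

lemma smul_add_smul_mem_pos {p q : E} (hp : p ∈ M) (hq : q ∈ M) {a b : ℝ} (ha : 0 ≤ a)
    (hb : 0 ≤ b) : a • p + b • q ∈ pos M := by
  classical
  refine ⟨{p, q}, fun r => (if r = p then a else 0) + (if r = q then b else 0), ?_, ?_, ?_⟩
  · simp [Set.insert_subset_iff, hp, hq]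
  · intro r
    dsimp only
    split_ifs <;> positivity
  · simp [add_smul, ite_smul, Finset.sum_add_distrib]

end PositiveHull

def wedge : V2 →ₗ[ℝ] V2 →ₗ[ℝ] ℝ :=
  LinearMap.mk₂ ℝ (fun a b => a 0 * b 1 - a 1 * b 0)
    (fun _ _ _ => by simp only [PiLp.add_apply]; ring)
    (fun _ _ _ => by simp only [PiLp.smul_apply, smul_eq_mul]; ring)
    (fun _ _ _ => by simp only [PiLp.add_apply]; ring)
    (fun _ _ _ => by simp only [PiLp.smul_apply, smul_eq_mul]; ring)

lemma wedge_apply (a b : V2) : wedge a b = a 0 * b 1 - a 1 * b 0 := rfl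

lemma wedge_swap (a b : V2) : wedge a b = -wedge b a := by
  simp only [wedge_apply]; ring

lemma wedge_self (a : V2) : wedge a a = 0 := by
  simp only [wedge_apply]; ring

lemma wedge_mul_wedge_add_wedge_mul_wedge (a b c d : V2) :
    wedge a b * wedge c d + wedge b c * wedge a d + wedge c a * wedge b d = 0 := by
  simp only [wedge_apply]; ring

lemma wedge_smul_eq_sub (p q t : V2) : wedge p q • t = wedge p t • q - wedge q t • p := by
  ext i
  fin_cases i <;> simp [wedge_apply] <;> ring

lemma norm_sq_eq_coords (a : V2) : ‖a‖ ^ 2 = a 0 ^ 2 + a 1 ^ 2 := by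
  simp [EuclideanSpace.norm_sq_eq, Fin.sum_univ_two]

lemma inner_eq_coords (a b : V2) : ⟪a, b⟫ = a 0 * b 0 + a 1 * b 1 := by
  simp [PiLp.inner_apply, Fin.sum_univ_two]; ring

lemma wedge_rotate (n : V2) : wedge n !₂[-n 1, n 0] = ‖n‖ ^ 2 := by
  simp [wedge_apply, norm_sq_eq_coords]; ring

lemma inner_sq_add_wedge_sq (a b : V2) : ⟪a, b⟫ ^ 2 + wedge a b ^ 2 = ‖a‖ ^ 2 * ‖b‖ ^ 2 := by
  simp only [inner_eq_coords, wedge_apply, norm_sq_eq_coords]; ring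

lemma inner_mul_wedge_sub (u a b : V2) :
    ⟪u, a⟫ * wedge u b - ⟪u, b⟫ * wedge u a = ‖u‖ ^ 2 * wedge a b := by
  simp only [inner_eq_coords, wedge_apply, norm_sq_eq_coords]; ring

lemma pos_ne_univ_of_wedge_nonpos {M : Set V2} {n : V2} (hn : n ≠ 0)
    (hM : ∀ g ∈ M, wedge n g ≤ 0) : pos M ≠ Set.univ := fun h => by
  have := nonpos_of_mem_pos (wedge n) hM (h ▸ Set.mem_univ !₂[-n 1, n 0])
  rw [wedge_rotate] at this
  exact (pow_pos (norm_pos_iff.mpr hn) 2).not_ge this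

lemma mem_pos_of_wedge_nonneg_of_nonpos {M : Set V2} {p q t : V2} (hp : p ∈ M) (hq : q ∈ M)
    (hpq : 0 < wedge p q) (hpt : 0 ≤ wedge p t) (hqt : wedge q t ≤ 0) : t ∈ pos M := by
  have ht : t = (-wedge q t / wedge p q) • p + (wedge p t / wedge p q) • q := by
    rw [div_eq_inv_mul, div_eq_inv_mul, mul_smul, mul_smul, ← smul_add, neg_smul,
      neg_add_eq_sub, ← wedge_smul_eq_sub, smul_smul, inv_mul_cancel₀ hpq.ne', one_smul]
  rw [ht]
  exact smul_add_smul_mem_pos hp hq (div_nonneg (neg_nonneg.mpr hqt) hpq.le)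
    (div_nonneg hpt hpq.le)

lemma pos_eq_univ_of_wedge_pos {a b c : V2} (hab : 0 < wedge a b) (hbc : 0 < wedge b c)
    (hca : 0 < wedge c a) : pos {a, b, c} = Set.univ := by
  refine Set.eq_univ_of_forall fun t => ?_
  have ha : a ∈ ({a, b, c} : Set V2) := by simp
  have hb : b ∈ ({a, b, c} : Set V2) := by simp
  have hc : c ∈ ({a, b, c} : Set V2) := by simp
  have hrel := wedge_mul_wedge_add_wedge_mul_wedge a b c t
  rcases le_or_gt 0 (wedge a t) with hat | hat
  · rcases le_or_gt (wedge b t) 0 with hbt | hbt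
    · exact mem_pos_of_wedge_nonneg_of_nonpos ha hb hab hat hbt
    · exact mem_pos_of_wedge_nonneg_of_nonpos hb hc hbc hbt.le (by nlinarith)
  · rcases le_or_gt 0 (wedge c t) with hct | hct
    · exact mem_pos_of_wedge_nonneg_of_nonpos hc ha hca hct hat.le
    · exact mem_pos_of_wedge_nonneg_of_nonpos hb hc hbc (by nlinarith) hct.le

lemma eq_or_eq_neg_of_wedge_eq_zero {u s : V2} (hu : ‖u‖ = 1) (hs : ‖s‖ = 1)
    (h : wedge u s = 0) : s = u ∨ s = -u := by
  have hsq : ⟪u, s⟫ ^ 2 = 1 := by simpa [h, hu, hs] using inner_sq_add_wedge_sq u s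
  rcases sq_eq_one_iff.mp hsq with h1 | h1
  · exact Or.inl ((inner_eq_one_iff_of_norm_eq_one hu hs).mp h1).symm
  · exact Or.inr (neg_eq_iff_eq_neg.mpr ((inner_eq_neg_one_iff_of_norm_eq_one hu hs).mp h1)).symm

def cotAngle (u s : V2) : ℝ := ⟪u, s⟫ / wedge u s

lemma wedge_nonneg_of_cotAngle_le {u a b : V2} (ha : 0 < wedge u a) (hb : 0 < wedge u b)
    (h : cotAngle u b ≤ cotAngle u a) : 0 ≤ wedge a b := by
  have hu : 0 < ‖u‖ ^ 2 := by
    refine pow_pos (norm_pos_iff.mpr ?_) 2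
    rintro rfl
    simp at ha
  rw [cotAngle, cotAngle, div_le_div_iff₀ hb ha] at h
  have := inner_mul_wedge_sub u a b
  nlinarith

lemma exists_wedge_nonpos {u : V2} (hu : u ≠ 0) {S : Set V2} (hS : S.Finite)
    (hline : ∀ s ∈ S, wedge u s ≠ 0)
    (hsep : ∀ v ∈ S, ∀ w ∈ S, 0 < wedge u v → wedge u w < 0 → wedge v w ≤ 0) :
    ∃ n ≠ 0, ∀ g ∈ insert u S, wedge n g ≤ 0 := by
  rcases {s ∈ S | 0 < wedge u s}.eq_empty_or_nonempty with hP | hP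
  · refine ⟨u, hu, ?_⟩
    rintro g (rfl | hg)
    · exact (wedge_self g).le
    · exact not_lt.mp fun h => hP.subset ⟨hg, h⟩
  obtain ⟨m, ⟨hmS, hum⟩, hmin⟩ :=
    Set.exists_min_image _ (cotAngle u) (hS.subset (Set.sep_subset _ _)) hP
  refine ⟨m, fun hm => by simp [hm] at hum, ?_⟩
  rintro g (rfl | hg)
  · rw [wedge_swap]
    linarith
  rcases (hline g hg).lt_or_gt with hug | hug
  · exact hsep m hmS g hg hum hug
  · rw [wedge_swap, neg_nonpos]
    exact wedge_nonneg_of_cotAngle_le hug hum (hmin g ⟨hg, hug⟩)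

theorem stmt2 (U : Set V2) (hunit : ∀ v ∈ U, ‖v‖ = 1)
    (u : V2) (hu : u ∈ U)
    (hsq : ¬ ∃ v ∈ U, ∃ w ∈ U, pos {u, v, w} = Set.univ) :
    ∀ x ∈ U, ∀ y ∈ U, ∀ z ∈ U, x ≠ u → y ≠ u → z ≠ u →
      pos {u, x, y, z} = Set.univ → (-u = x ∨ -u = y ∨ -u = z) := by
  intro x hx y hy z hz hxu hyu hzu hspan
  by_contra! hneg
  set S : Set V2 := {x, y, z}
  have hSU : S ⊆ U := by simp [S, Set.insert_subset_iff, hx, hy, hz]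
  have hline : ∀ s ∈ S, wedge u s ≠ 0 := by
    intro s hs h
    rcases eq_or_eq_neg_of_wedge_eq_zero (hunit u hu) (hunit s (hSU hs)) h with rfl | rfl <;>
      rcases hs with rfl | rfl | rfl <;> simp_all
  have hsep : ∀ v ∈ S, ∀ w ∈ S, 0 < wedge u v → wedge u w < 0 → wedge v w ≤ 0 := by
    intro v hv w hw huv huw
    by_contra! hvw
    refine hsq ⟨v, hSU hv, w, hSU hw, pos_eq_univ_of_wedge_pos huv hvw ?_⟩
    rw [wedge_swap]
    linarith
  have hu0 : u ≠ 0 := by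
    rintro rfl
    simpa using hunit 0 hu
  obtain ⟨n, hn, hle⟩ := exists_wedge_nonpos hu0 S.toFinite hline hsep
  exact pos_ne_univ_of_wedge_nonpos hn hle hspan
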